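/- Fix u ≥ 1 and a finite set Val with v = |Val| ≥ 2, and fix ε > 0. Define M : Val^u → Val^u → ℝ by M x z = (exp(ε) / (v − 1 + exp(ε)))^u · exp(−ε · hammingDist(x, z)). Then: (i) M is a channel matrix (each row is a probability distribution, in particular ∑_{z ∈ Val^u} exp(−ε · hammingDist(x, z)) = ((v − 1 + exp(ε)) / exp(ε))^u for every x); (ii) M satisfies ε-differential privacy with respect to the Hamming adjacency on Val^u; (iii) ∑_{z ∈ Val^u} max_{x} M x z = (v · exp(ε) / (v − 1 + exp(ε)))^u, i.e. under the uniform input distribution the min-entropy leakage of M equals u · log₂(v · exp(ε) / (v − 1 + exp(ε))), so the leakage bound is tight. -/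

import Mathlib

/-- The Hamming graph on `Fin u → Val`: two tuples are adjacent iff they differ in
exactly one coordinate, i.e. their Hamming distance is `1`. -/
def hammingGraph (u : ℕ) (Val : Type*) [DecidableEq Val] :
    SimpleGraph (Fin u → Val) where
  Adj x y := hammingDist x y = 1
  symm := ⟨by
    intro x y h
    rwa [hammingDist_comm]⟩
  loopless := ⟨by
    intro x h
    simp [hammingDist_self] at h⟩

/-!
Since `exp (-ε d(x, z)) = ∏ᵢ [xᵢ = zᵢ ? 1 : e^{-ε}]`, the row sum factors over coordinates into
`(1 + (v - 1) e^{-ε})^u`, which is what the normalising constant cancels. Differential privacy is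
the triangle inequality for the Hamming distance, and the column maximum of `M` is attained on the
diagonal, so every column contributes the same amount to the leakage.
-/

open Finset Real

section HammingSums

variable {ι : Type*} [Fintype ι]

theorem prod_ite_eq_pow_hammingDist {M : Type*} [CommMonoid M] {β : ι → Type*}
    [∀ i, DecidableEq (β i)] (x z : ∀ i, β i) (r : M) :
    ∏ i, (if x i = z i then 1 else r) = r ^ hammingDist x z := by
  rw [prod_ite, prod_const_one, one_mul, prod_const]
  rfl

variable {β : Type*} [Fintype β] [DecidableEq β]

theorem sum_ite_eq_one_else {R : Type*} [CommRing R] (a : β) (r : R) :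
    ∑ b, (if a = b then 1 else r) = 1 + ((Fintype.card β : R) - 1) * r := by
  rw [← add_sum_erase _ _ (mem_univ a), if_pos rfl,
    sum_congr rfl fun b hb => if_neg (ne_of_mem_erase hb).symm, sum_const,
    card_erase_of_mem (mem_univ a), card_univ, nsmul_eq_mul,
    Nat.cast_sub (Fintype.card_pos_iff.2 ⟨a⟩), Nat.cast_one]

theorem sum_pow_hammingDist [DecidableEq ι] {R : Type*} [CommRing R] (x : ι → β) (r : R) :
    ∑ z, r ^ hammingDist x z = (1 + ((Fintype.card β : R) - 1) * r) ^ Fintype.card ι := by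
  simp_rw [← prod_ite_eq_pow_hammingDist,
    ← Fintype.prod_sum fun i b => if x i = b then (1 : R) else r, sum_ite_eq_one_else,
    prod_const, card_univ]

end HammingSums

section HammingMechanism

variable {ι : Type*} [Fintype ι] {β : Type*} [DecidableEq β] {ε : ℝ}

theorem sum_exp_neg_mul_hammingDist [DecidableEq ι] [Fintype β] (ε : ℝ) (x : ι → β) :
    ∑ z, exp (-ε * hammingDist x z) =
      (((Fintype.card β : ℝ) - 1 + exp ε) / exp ε) ^ Fintype.card ι := by
  simp_rw [mul_comm (-ε), exp_nat_mul, sum_pow_hammingDist, exp_neg]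
  congr 1
  field_simp
  ring

theorem exp_neg_mul_hammingDist_le (hε : 0 ≤ ε) (x x' z : ι → β) :
    exp (-ε * hammingDist x z) ≤ exp (ε * hammingDist x x') * exp (-ε * hammingDist x' z) := by
  have htri : (hammingDist x' z : ℝ) ≤ hammingDist x x' + hammingDist x z := by
    rw [hammingDist_comm x x']
    exact_mod_cast hammingDist_triangle x' x z
  rw [← exp_add, exp_le_exp]
  nlinarith

theorem iSup_exp_neg_mul_hammingDist (hε : 0 ≤ ε) (z : ι → β) :
    ⨆ x, exp (-ε * hammingDist x z) = 1 := by
  have : Nonempty (ι → β) := ⟨z⟩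
  have hle (x : ι → β) : exp (-ε * hammingDist x z) ≤ 1 :=
    exp_le_one_iff.2 (mul_nonpos_of_nonpos_of_nonneg (neg_nonpos.2 hε) (Nat.cast_nonneg _))
  exact le_antisymm (ciSup_le hle) (le_ciSup_of_le ⟨1, Set.forall_mem_range.2 hle⟩ z (by simp))

variable [Fintype β]

variable (ε) in
noncomputable def hammingMechanism (x z : ι → β) : ℝ :=
  (exp ε / ((Fintype.card β : ℝ) - 1 + exp ε)) ^ Fintype.card ι * exp (-ε * hammingDist x z)

omit [DecidableEq β] in
theorem card_sub_one_add_exp_pos [Nonempty β] (ε : ℝ) : 0 < (Fintype.card β : ℝ) - 1 + exp ε := by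
  have : (1 : ℝ) ≤ Fintype.card β := Nat.one_le_cast.2 Fintype.card_pos
  positivity

theorem hammingMechanism_nonneg [Nonempty β] (x z : ι → β) : 0 ≤ hammingMechanism ε x z := by
  have := card_sub_one_add_exp_pos (β := β) ε
  unfold hammingMechanism
  positivity

theorem sum_hammingMechanism [DecidableEq ι] [Nonempty β] (x : ι → β) :
    ∑ z, hammingMechanism ε x z = 1 := by
  simp only [hammingMechanism, ← mul_sum]
  rw [sum_exp_neg_mul_hammingDist, ← mul_pow,
    div_mul_div_cancel₀ (card_sub_one_add_exp_pos ε).ne', div_self (exp_ne_zero ε), one_pow]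

theorem hammingMechanism_le_exp_mul [Nonempty β] (hε : 0 ≤ ε) {x x' : ι → β}
    (h : hammingDist x x' = 1) (z : ι → β) :
    hammingMechanism ε x z ≤ exp ε * hammingMechanism ε x' z := by
  have hexp := exp_neg_mul_hammingDist_le hε x x' z
  rw [h, Nat.cast_one, mul_one] at hexp
  have := card_sub_one_add_exp_pos (β := β) ε
  unfold hammingMechanism
  rw [mul_left_comm]
  exact mul_le_mul_of_nonneg_left hexp (by positivity)

theorem iSup_hammingMechanism [Nonempty β] (hε : 0 ≤ ε) (z : ι → β) :
    ⨆ x, hammingMechanism ε x z =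
      (exp ε / ((Fintype.card β : ℝ) - 1 + exp ε)) ^ Fintype.card ι := by
  have := card_sub_one_add_exp_pos (β := β) ε
  simp only [hammingMechanism]
  rw [← mul_iSup_of_nonneg (by positivity), iSup_exp_neg_mul_hammingDist hε, mul_one]

theorem sum_iSup_hammingMechanism [DecidableEq ι] [Nonempty β] (hε : 0 ≤ ε) :
    ∑ z : ι → β, ⨆ x, hammingMechanism ε x z =
      ((Fintype.card β : ℝ) * exp ε / ((Fintype.card β : ℝ) - 1 + exp ε)) ^ Fintype.card ι := by
  simp only [iSup_hammingMechanism hε, sum_const, card_univ, Fintype.card_fun, nsmul_eq_mul,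
    Nat.cast_pow, mul_div_assoc, mul_pow]

end HammingMechanism

theorem dp_leakage_bound_tight_general (u : ℕ)
    (Val : Type*) [Fintype Val] [DecidableEq Val]
    (hv : 2 ≤ Fintype.card Val) (ε : ℝ) (hε : 0 < ε)
    (M : (Fin u → Val) → (Fin u → Val) → ℝ)
    (hM : ∀ x z, M x z =
      (Real.exp ε / ((Fintype.card Val : ℝ) - 1 + Real.exp ε)) ^ u *
        Real.exp (-ε * (hammingDist x z : ℝ))) :
    (∀ x : Fin u → Val, ∑ z : Fin u → Val, Real.exp (-ε * (hammingDist x z : ℝ)) =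
        (((Fintype.card Val : ℝ) - 1 + Real.exp ε) / Real.exp ε) ^ u) ∧
    (∀ x z, 0 ≤ M x z) ∧
    (∀ x, ∑ z, M x z = 1) ∧
    (∀ x x', (hammingGraph u Val).Adj x x' → ∀ z, M x z ≤ Real.exp ε * M x' z) ∧
    (∑ z, ⨆ x, M x z) =
      ((Fintype.card Val : ℝ) * Real.exp ε /
        ((Fintype.card Val : ℝ) - 1 + Real.exp ε)) ^ u ∧
    Real.logb 2 (∑ z, ⨆ x, M x z) =
      (u : ℝ) * Real.logb 2 ((Fintype.card Val : ℝ) * Real.exp ε /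
        ((Fintype.card Val : ℝ) - 1 + Real.exp ε)) := by
  have : Nonempty Val := Fintype.card_pos_iff.1 (by omega)
  obtain rfl : M = hammingMechanism ε := by
    ext x z
    rw [hM, hammingMechanism, Fintype.card_fin]
  have hleak := sum_iSup_hammingMechanism (ι := Fin u) (β := Val) hε.le
  rw [Fintype.card_fin] at hleak
  refine ⟨fun x => ?_, hammingMechanism_nonneg, sum_hammingMechanism,
    fun x x' h => hammingMechanism_le_exp_mul hε.le h, hleak, by rw [hleak, logb_pow]⟩
  rw [sum_exp_neg_mul_hammingDist, Fintype.card_fin]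

/-- **tightness of the leakage bound.** Define
`M x z = (e^ε / (v - 1 + e^ε))^u * exp (-ε * hammingDist x z)` on `Val^u × Val^u`.
Then `M` is a channel matrix (in particular
`∑_z exp (-ε * hammingDist x z) = ((v - 1 + e^ε) / e^ε)^u` for every `x`), it satisfies
`ε`-differential privacy with respect to the Hamming adjacency, and
`∑_z max_x M x z = (v e^ε / (v - 1 + e^ε))^u`, i.e. under the uniform input
distribution its min-entropy leakage reaches the bound
`u * log₂ (v e^ε / (v - 1 + e^ε))`. -/
theorem dp_leakage_bound_tight (u : ℕ) (hu : 1 ≤ u)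
    (Val : Type*) [Fintype Val] [DecidableEq Val]
    (hv : 2 ≤ Fintype.card Val) (ε : ℝ) (hε : 0 < ε)
    (M : (Fin u → Val) → (Fin u → Val) → ℝ)
    (hM : ∀ x z, M x z =
      (Real.exp ε / ((Fintype.card Val : ℝ) - 1 + Real.exp ε)) ^ u *
        Real.exp (-ε * (hammingDist x z : ℝ))) :
    (∀ x : Fin u → Val, ∑ z : Fin u → Val, Real.exp (-ε * (hammingDist x z : ℝ)) =
        (((Fintype.card Val : ℝ) - 1 + Real.exp ε) / Real.exp ε) ^ u) ∧
    (∀ x z, 0 ≤ M x z) ∧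
    (∀ x, ∑ z, M x z = 1) ∧
    (∀ x x', (hammingGraph u Val).Adj x x' → ∀ z, M x z ≤ Real.exp ε * M x' z) ∧
    (∑ z, ⨆ x, M x z) =
      ((Fintype.card Val : ℝ) * Real.exp ε /
        ((Fintype.card Val : ℝ) - 1 + Real.exp ε)) ^ u ∧
    Real.logb 2 (∑ z, ⨆ x, M x z) =
      (u : ℝ) * Real.logb 2 ((Fintype.card Val : ℝ) * Real.exp ε /
        ((Fintype.card Val : ℝ) - 1 + Real.exp ε)) :=
  dp_leakage_bound_tight_general u Val hv ε hε M hM
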